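/- For every n ≥ 5 there exist integers α, β, γ with α + β + γ − 1 = n such that the theta graph Θ(α, β, γ) is of non-QE class. -/
import Mathlib


/-- The vertex set of the theta graph `Θ(a,b,c)`: two endpoints `s`, `t` together with the
internal vertices `x_1,…,x_{a-1}`, `y_1,…,y_{b-1}`, `z_1,…,z_{c-1}` of the three paths
(`x i` stands for `x_{i+1}`, etc.). -/
inductive ThetaV (a b c : ℕ) : Type
  | s : ThetaV a b c
  | t : ThetaV a b c
  | x : Fin (a - 1) → ThetaV a b c
  | y : Fin (b - 1) → ThetaV a b c
  | z : Fin (c - 1) → ThetaV a b c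
deriving DecidableEq, Fintype

/-- Generating relation for the edges of the theta graph `Θ(a,b,c)`. -/
def thetaRel (a b c : ℕ) : ThetaV a b c → ThetaV a b c → Prop
  | .s, .t => a = 1 ∨ b = 1 ∨ c = 1
  | .s, .x i => (i : ℕ) = 0
  | .s, .y i => (i : ℕ) = 0
  | .s, .z i => (i : ℕ) = 0
  | .t, .x i => (i : ℕ) = a - 2
  | .t, .y i => (i : ℕ) = b - 2
  | .t, .z i => (i : ℕ) = c - 2
  | .x i, .x j => (j : ℕ) = (i : ℕ) + 1
  | .y i, .y j => (j : ℕ) = (i : ℕ) + 1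
  | .z i, .z j => (j : ℕ) = (i : ℕ) + 1
  | _, _ => False

/-- The theta graph `Θ(a,b,c)`: three internally disjoint paths of lengths `a`, `b`, `c`
joining the two common endpoints `s` and `t`. -/
def thetaGraph (a b c : ℕ) : SimpleGraph (ThetaV a b c) :=
  SimpleGraph.fromRel (thetaRel a b c)

/-- A Tanaka quintuple in a graph `G`. -/
def TanakaQuintuple {V : Type*} (G : SimpleGraph V) (v1 v2 v3 v4 v5 : V) : Prop :=
  G.Adj v1 v2 ∧ G.Adj v3 v4 ∧
  G.dist v1 v3 = G.dist v2 v4 ∧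
  G.dist v1 v4 = G.dist v1 v3 + 1 ∧
  G.dist v2 v3 = G.dist v1 v3 + 1 ∧
  G.dist v5 v2 = G.dist v5 v1 + 1 ∧
  G.dist v5 v3 = G.dist v5 v4 + 1

namespace Scratch
open SimpleGraph

variable {c : ℕ}

lemma adj_iff {u v : ThetaV 2 2 c} :
    (thetaGraph 2 2 c).Adj u v ↔ u ≠ v ∧ (thetaRel 2 2 c u v ∨ thetaRel 2 2 c v u) :=
  SimpleGraph.fromRel_adj _ _ _

def φS (c : ℕ) : ThetaV 2 2 c → ℤ
  | .s => 0 | .t => 2 | .x _ => 1 | .y _ => 1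
  | .z i => min ((i : ℤ) + 1) ((c : ℤ) + 1 - (i : ℤ))

lemma lipS (hc : 2 ≤ c) {u v : ThetaV 2 2 c} (h : (thetaGraph 2 2 c).Adj u v) :
    |φS c u - φS c v| ≤ 1 := by
  rw [adj_iff] at h
  obtain ⟨hne, h⟩ := h
  rcases u with _ | _ | i | i | i <;> rcases v with _ | _ | j | j | j <;>
      simp only [thetaRel, φS, or_false, false_or, or_self] at h ⊢ <;>
    first
    | exact h.elim
    | (exact absurd rfl hne)
    | (first
        | (have h1 := i.is_lt; have h2 := j.is_lt; rw [abs_le]; constructor <;> omega)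
        | (have h1 := i.is_lt; rw [abs_le]; constructor <;> omega)
        | (have h1 := j.is_lt; rw [abs_le]; constructor <;> omega)
        | (rw [abs_le]; constructor <;> omega))

def φT (c : ℕ) : ThetaV 2 2 c → ℤ
  | .s => 2 | .t => 0 | .x _ => 1 | .y _ => 1
  | .z i => min ((c : ℤ) - 1 - (i : ℤ)) ((i : ℤ) + 3)

lemma lipT (hc : 2 ≤ c) {u v : ThetaV 2 2 c} (h : (thetaGraph 2 2 c).Adj u v) :
    |φT c u - φT c v| ≤ 1 := by
  rw [adj_iff] at h
  obtain ⟨hne, h⟩ := h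
  rcases u with _ | _ | i | i | i <;> rcases v with _ | _ | j | j | j <;>
      simp only [thetaRel, φT, or_false, false_or, or_self] at h ⊢ <;>
    first
    | exact h.elim
    | (exact absurd rfl hne)
    | (first
        | (have h1 := i.is_lt; have h2 := j.is_lt; rw [abs_le]; constructor <;> omega)
        | (have h1 := i.is_lt; rw [abs_le]; constructor <;> omega)
        | (have h1 := j.is_lt; rw [abs_le]; constructor <;> omega)
        | (rw [abs_le]; constructor <;> omega))

def φX (c : ℕ) : ThetaV 2 2 c → ℤ
  | .s => 1 | .t => 1 | .x _ => 0 | .y _ => 2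
  | .z i => min ((i : ℤ) + 2) ((c : ℤ) - (i : ℤ))

lemma lipX (hc : 2 ≤ c) {u v : ThetaV 2 2 c} (h : (thetaGraph 2 2 c).Adj u v) :
    |φX c u - φX c v| ≤ 1 := by
  rw [adj_iff] at h
  obtain ⟨hne, h⟩ := h
  rcases u with _ | _ | i | i | i <;> rcases v with _ | _ | j | j | j <;>
      simp only [thetaRel, φX, or_false, false_or, or_self] at h ⊢ <;>
    first
    | exact h.elim
    | (exact absurd rfl hne)
    | (first
        | (have h1 := i.is_lt; have h2 := j.is_lt; rw [abs_le]; constructor <;> omega)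
        | (have h1 := i.is_lt; rw [abs_le]; constructor <;> omega)
        | (have h1 := j.is_lt; rw [abs_le]; constructor <;> omega)
        | (rw [abs_le]; constructor <;> omega))

def φY (c : ℕ) : ThetaV 2 2 c → ℤ
  | .s => 1 | .t => 1 | .x _ => 2 | .y _ => 0
  | .z i => min ((i : ℤ) + 2) ((c : ℤ) - (i : ℤ))

lemma lipY (hc : 2 ≤ c) {u v : ThetaV 2 2 c} (h : (thetaGraph 2 2 c).Adj u v) :
    |φY c u - φY c v| ≤ 1 := by
  rw [adj_iff] at h
  obtain ⟨hne, h⟩ := h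
  rcases u with _ | _ | i | i | i <;> rcases v with _ | _ | j | j | j <;>
      simp only [thetaRel, φY, or_false, false_or, or_self] at h ⊢ <;>
    first
    | exact h.elim
    | (exact absurd rfl hne)
    | (first
        | (have h1 := i.is_lt; have h2 := j.is_lt; rw [abs_le]; constructor <;> omega)
        | (have h1 := i.is_lt; rw [abs_le]; constructor <;> omega)
        | (have h1 := j.is_lt; rw [abs_le]; constructor <;> omega)
        | (rw [abs_le]; constructor <;> omega))

lemma walk_bound (φ : ThetaV 2 2 c → ℤ)
    (hφ : ∀ {u v : ThetaV 2 2 c}, (thetaGraph 2 2 c).Adj u v → |φ u - φ v| ≤ 1)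
    {u v : ThetaV 2 2 c} (W : (thetaGraph 2 2 c).Walk u v) :
    |φ u - φ v| ≤ (W.length : ℤ) := by
  induction W with
  | nil => simp
  | @cons a b d h W ih =>
      have h1 := hφ h
      have h2 : |φ a - φ d| ≤ |φ a - φ b| + |φ b - φ d| := abs_sub_le _ _ _
      simp only [Walk.length_cons]
      push_cast
      linarith

lemma pot_le_dist (φ : ThetaV 2 2 c → ℤ)
    (hφ : ∀ {u v : ThetaV 2 2 c}, (thetaGraph 2 2 c).Adj u v → |φ u - φ v| ≤ 1)
    {u v : ThetaV 2 2 c} (W0 : (thetaGraph 2 2 c).Walk u v) :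
    |φ u - φ v| ≤ ((thetaGraph 2 2 c).dist u v : ℤ) := by
  obtain ⟨W, hW⟩ := (Reachable.exists_walk_length_eq_dist ⟨W0⟩ : _)
  calc |φ u - φ v| ≤ (W.length : ℤ) := walk_bound φ hφ W
  _ = _ := by rw [hW]

lemma adj_sx (hc : 2 ≤ c) (i : Fin (2 - 1)) : (thetaGraph 2 2 c).Adj .s (.x i) := by
  rw [adj_iff]
  refine ⟨by simp, Or.inl ?_⟩
  have := i.is_lt
  simp only [thetaRel]
  omega

lemma adj_xt (hc : 2 ≤ c) (i : Fin (2 - 1)) : (thetaGraph 2 2 c).Adj (.x i) .t := by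
  rw [adj_iff]
  refine ⟨by simp, Or.inr ?_⟩
  have := i.is_lt
  simp only [thetaRel]
  omega

lemma adj_sy (hc : 2 ≤ c) (i : Fin (2 - 1)) : (thetaGraph 2 2 c).Adj .s (.y i) := by
  rw [adj_iff]
  refine ⟨by simp, Or.inl ?_⟩
  have := i.is_lt
  simp only [thetaRel]
  omega

lemma adj_yt (hc : 2 ≤ c) (i : Fin (2 - 1)) : (thetaGraph 2 2 c).Adj (.y i) .t := by
  rw [adj_iff]
  refine ⟨by simp, Or.inr ?_⟩
  have := i.is_lt
  simp only [thetaRel]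
  omega

lemma adj_sz (h0 : 0 < c - 1) : (thetaGraph 2 2 c).Adj .s (.z ⟨0, h0⟩) := by
  rw [adj_iff]
  exact ⟨by simp, Or.inl (by simp [thetaRel])⟩

lemma adj_zz {i j : Fin (c - 1)} (hij : (j : ℕ) = (i : ℕ) + 1) :
    (thetaGraph 2 2 c).Adj (.z i) (.z j) := by
  rw [adj_iff]
  refine ⟨?_, Or.inl (by simp [thetaRel, hij])⟩
  simp only [ne_eq, ThetaV.z.injEq]
  intro h
  rw [h] at hij
  omega

lemma adj_tz (h0 : c - 2 < c - 1) : (thetaGraph 2 2 c).Adj .t (.z ⟨c - 2, h0⟩) := by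
  rw [adj_iff]
  exact ⟨by simp, Or.inl (by simp [thetaRel])⟩

lemma exists_wSZ (hc : 2 ≤ c) (i : ℕ) (h : i < c - 1) :
    ∃ W : (thetaGraph 2 2 c).Walk .s (.z ⟨i, h⟩), W.length = i + 1 := by
  induction i with
  | zero => exact ⟨Walk.cons (adj_sz (by omega)) Walk.nil, by simp⟩
  | succ i ih =>
      obtain ⟨W, hW⟩ := ih (by omega)
      refine ⟨W.concat (adj_zz (by simp)), ?_⟩
      rw [Walk.length_concat, hW]

lemma exists_wTZ (hc : 2 ≤ c) (j : ℕ) (hj : j ≤ c - 2) :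
    ∃ W : (thetaGraph 2 2 c).Walk .t (.z ⟨c - 2 - j, by omega⟩), W.length = j + 1 := by
  induction j with
  | zero => exact ⟨Walk.cons (adj_tz (by omega)) Walk.nil, by simp⟩
  | succ j ih =>
      obtain ⟨W, hW⟩ := ih (by omega)
      refine ⟨W.concat (adj_zz (by simp; omega)).symm, ?_⟩
      rw [Walk.length_concat, hW]

section Dists
variable (hc : 2 ≤ c) {m : ℕ} (hA : 2 * m + 2 ≤ c) (hB : c ≤ 2 * m + 3) (hm : m < c - 1)

include hc

lemma dist_st : (thetaGraph 2 2 c).dist .s .t = 2 := by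
  have W : (thetaGraph 2 2 c).Walk .s .t :=
    Walk.cons (adj_sx hc ⟨0, by omega⟩) (Walk.cons (adj_xt hc ⟨0, by omega⟩) Walk.nil)
  have h1 : (thetaGraph 2 2 c).dist .s .t ≤ 2 := by
    have := SimpleGraph.dist_le
      (Walk.cons (adj_sx hc ⟨0, by omega⟩) (Walk.cons (adj_xt hc ⟨0, by omega⟩) Walk.nil))
    simp only [Walk.length_cons, Walk.length_nil] at this
    omega
  have h2 := pot_le_dist (φS c) (fun h => lipS hc h) W
  simp only [φS] at h2
  norm_num at h2
  omega

lemma dist_sx (i : Fin (2 - 1)) : (thetaGraph 2 2 c).dist .s (.x i) = 1 :=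
  SimpleGraph.dist_eq_one_iff_adj.mpr (adj_sx hc i)

lemma dist_sy (i : Fin (2 - 1)) : (thetaGraph 2 2 c).dist .s (.y i) = 1 :=
  SimpleGraph.dist_eq_one_iff_adj.mpr (adj_sy hc i)

lemma dist_xt (i : Fin (2 - 1)) : (thetaGraph 2 2 c).dist (.x i) .t = 1 :=
  SimpleGraph.dist_eq_one_iff_adj.mpr (adj_xt hc i)

lemma dist_yt (i : Fin (2 - 1)) : (thetaGraph 2 2 c).dist (.y i) .t = 1 :=
  SimpleGraph.dist_eq_one_iff_adj.mpr (adj_yt hc i)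

lemma dist_xy (i j : Fin (2 - 1)) : (thetaGraph 2 2 c).dist (.x i) (.y j) = 2 := by
  have W : (thetaGraph 2 2 c).Walk (.x i) (.y j) :=
    Walk.cons (adj_sx hc i).symm (Walk.cons (adj_sy hc j) Walk.nil)
  have h1 : (thetaGraph 2 2 c).dist (.x i) (.y j) ≤ 2 := by
    have := SimpleGraph.dist_le
      (Walk.cons (adj_sx hc i).symm (Walk.cons (adj_sy hc j) Walk.nil))
    simp only [Walk.length_cons, Walk.length_nil] at this
    omega
  have h2 := pot_le_dist (φX c) (fun h => lipX hc h) W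
  simp only [φX] at h2
  norm_num at h2
  omega

include hA hm

lemma dist_sz : (thetaGraph 2 2 c).dist .s (.z ⟨m, hm⟩) = m + 1 := by
  obtain ⟨W, hW⟩ := exists_wSZ hc m hm
  have h1 : (thetaGraph 2 2 c).dist .s (.z ⟨m, hm⟩) ≤ m + 1 := by
    have := SimpleGraph.dist_le W
    omega
  have h2 := pot_le_dist (φS c) (fun h => lipS hc h) W
  simp only [φS] at h2
  rw [abs_sub_comm, abs_le] at h2
  have h3 : ((m : ℤ) + 1) ≤ (thetaGraph 2 2 c).dist .s (.z ⟨m, hm⟩) := by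
    have hmin : min ((m : ℤ) + 1) ((c : ℤ) + 1 - (m : ℤ)) = (m : ℤ) + 1 := by omega
    omega
  omega

lemma dist_xz (i : Fin (2 - 1)) :
    (thetaGraph 2 2 c).dist (.x i) (.z ⟨m, hm⟩) = m + 2 := by
  obtain ⟨W0, hW0⟩ := exists_wSZ hc m hm
  have W : (thetaGraph 2 2 c).Walk (.x i) (.z ⟨m, hm⟩) := Walk.cons (adj_sx hc i).symm W0
  have h1 : (thetaGraph 2 2 c).dist (.x i) (.z ⟨m, hm⟩) ≤ m + 2 := by
    have := SimpleGraph.dist_le (Walk.cons (adj_sx hc i).symm W0)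
    simp only [Walk.length_cons] at this
    omega
  have h2 := pot_le_dist (φX c) (fun h => lipX hc h) W
  simp only [φX] at h2
  rw [abs_sub_comm, abs_le] at h2
  have h3 : ((m : ℤ) + 2) ≤ (thetaGraph 2 2 c).dist (.x i) (.z ⟨m, hm⟩) := by omega
  omega

lemma dist_yz (i : Fin (2 - 1)) :
    (thetaGraph 2 2 c).dist (.y i) (.z ⟨m, hm⟩) = m + 2 := by
  obtain ⟨W0, hW0⟩ := exists_wSZ hc m hm
  have W : (thetaGraph 2 2 c).Walk (.y i) (.z ⟨m, hm⟩) := Walk.cons (adj_sy hc i).symm W0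
  have h1 : (thetaGraph 2 2 c).dist (.y i) (.z ⟨m, hm⟩) ≤ m + 2 := by
    have := SimpleGraph.dist_le (Walk.cons (adj_sy hc i).symm W0)
    simp only [Walk.length_cons] at this
    omega
  have h2 := pot_le_dist (φY c) (fun h => lipY hc h) W
  simp only [φY] at h2
  rw [abs_sub_comm, abs_le] at h2
  have h3 : ((m : ℤ) + 2) ≤ (thetaGraph 2 2 c).dist (.y i) (.z ⟨m, hm⟩) := by omega
  omega

include hB

lemma dist_tz : (thetaGraph 2 2 c).dist .t (.z ⟨m, hm⟩) = c - 1 - m := by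
  obtain ⟨W, hW⟩ := exists_wTZ hc (c - 2 - m) (by omega)
  have h1 := SimpleGraph.dist_le W
  have h2 := pot_le_dist (φT c) (fun h => lipT hc h) W
  simp only [show c - 2 - (c - 2 - m) = m from by omega] at h1 h2
  simp only [φT] at h2
  rw [abs_le] at h2
  omega

end Dists

def fW (c m : ℕ) (A B r : ℝ) : ThetaV 2 2 c → ℝ
  | .s => A
  | .t => A
  | .x _ => B
  | .y _ => B
  | .z i => if (i : ℕ) = m then r else 0

lemma main (c m : ℕ) (hc : 2 ≤ c) (hA : 2 * m + 2 ≤ c) (hB : c ≤ 2 * m + 3) (A B r : ℝ) :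
    (∑ v, fW c m A B r v) = 2 * A + 2 * B + r ∧
    ∑ v, ∑ w, ((thetaGraph 2 2 c).dist v w : ℝ) * fW c m A B r v * fW c m A B r w =
      2 * (2 * A * A + 4 * A * B + 2 * B * B) + 2 * ((m : ℝ) + 1) * A * r
        + 2 * ((c - 1 - m : ℕ) : ℝ) * A * r + 4 * ((m : ℝ) + 2) * B * r := by
  have hm : m < c - 1 := by omega
  have h01 : (0 : ℕ) < 2 - 1 := by omega
  set f := fW c m A B r with hf
  set S : Finset (ThetaV 2 2 c) :=
    {.s, .t, .x ⟨0, h01⟩, .y ⟨0, h01⟩, .z ⟨m, hm⟩} with hS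
  have hzero : ∀ v : ThetaV 2 2 c, v ∉ S → f v = 0 := by
    intro v hv
    rcases v with _ | _ | i | i | i
    · exact absurd (by simp [hS]) hv
    · exact absurd (by simp [hS]) hv
    · refine absurd ?_ hv
      have : i = ⟨0, h01⟩ := Fin.ext (by have := i.is_lt; omega)
      simp [hS, this]
    · refine absurd ?_ hv
      have : i = ⟨0, h01⟩ := Fin.ext (by have := i.is_lt; omega)
      simp [hS, this]
    · by_cases h : (i : ℕ) = m
      · refine absurd ?_ hv
        have : i = ⟨m, hm⟩ := Fin.ext h
        simp [hS, this]
      · simp [hf, fW, h]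
  have hsum : ∀ g : ThetaV 2 2 c → ℝ, (∀ v ∉ S, g v = 0) → ∑ v, g v = ∑ v ∈ S, g v :=
    fun g hg => (Finset.sum_subset (Finset.subset_univ S) (fun v _ hv => hg v hv)).symm
  have dss := SimpleGraph.dist_self (G := thetaGraph 2 2 c) (v := ThetaV.s)
  have dtt := SimpleGraph.dist_self (G := thetaGraph 2 2 c) (v := ThetaV.t)
  have dxx := SimpleGraph.dist_self (G := thetaGraph 2 2 c) (v := ThetaV.x ⟨0, h01⟩)
  have dyy := SimpleGraph.dist_self (G := thetaGraph 2 2 c) (v := ThetaV.y ⟨0, h01⟩)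
  have dzz := SimpleGraph.dist_self (G := thetaGraph 2 2 c) (v := ThetaV.z ⟨m, hm⟩)
  have dst := dist_st hc
  have dts : (thetaGraph 2 2 c).dist .t .s = 2 := by rw [SimpleGraph.dist_comm]; exact dst
  have dsx := dist_sx hc ⟨0, h01⟩
  have dxs : (thetaGraph 2 2 c).dist (.x ⟨0, h01⟩) .s = 1 := by
    rw [SimpleGraph.dist_comm]; exact dsx
  have dsy := dist_sy hc ⟨0, h01⟩
  have dys : (thetaGraph 2 2 c).dist (.y ⟨0, h01⟩) .s = 1 := by
    rw [SimpleGraph.dist_comm]; exact dsy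
  have dxt := dist_xt hc ⟨0, h01⟩
  have dtx : (thetaGraph 2 2 c).dist .t (.x ⟨0, h01⟩) = 1 := by
    rw [SimpleGraph.dist_comm]; exact dxt
  have dyt := dist_yt hc ⟨0, h01⟩
  have dty : (thetaGraph 2 2 c).dist .t (.y ⟨0, h01⟩) = 1 := by
    rw [SimpleGraph.dist_comm]; exact dyt
  have dxy := dist_xy hc ⟨0, h01⟩ ⟨0, h01⟩
  have dyx : (thetaGraph 2 2 c).dist (.y ⟨0, h01⟩) (.x ⟨0, h01⟩) = 2 := by
    rw [SimpleGraph.dist_comm]; exact dxy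
  have dsz := dist_sz hc hA hm
  have dzs : (thetaGraph 2 2 c).dist (.z ⟨m, hm⟩) .s = m + 1 := by
    rw [SimpleGraph.dist_comm]; exact dsz
  have dtz := dist_tz hc hA hB hm
  have dzt : (thetaGraph 2 2 c).dist (.z ⟨m, hm⟩) .t = c - 1 - m := by
    rw [SimpleGraph.dist_comm]; exact dtz
  have dxz := dist_xz hc hA hm ⟨0, h01⟩
  have dzx : (thetaGraph 2 2 c).dist (.z ⟨m, hm⟩) (.x ⟨0, h01⟩) = m + 2 := by
    rw [SimpleGraph.dist_comm]; exact dxz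
  have dyz := dist_yz hc hA hm ⟨0, h01⟩
  have dzy : (thetaGraph 2 2 c).dist (.z ⟨m, hm⟩) (.y ⟨0, h01⟩) = m + 2 := by
    rw [SimpleGraph.dist_comm]; exact dyz
  constructor
  · rw [hsum f hzero, hS]
    rw [Finset.sum_insert (by simp), Finset.sum_insert (by simp),
      Finset.sum_insert (by simp), Finset.sum_insert (by simp), Finset.sum_singleton]
    simp [hf, fW]
    ring
  · simp only [Fin.mk_zero] at dxx dyy dsx dxs dsy dys dxt dtx dyt dty dxy dyx dxz dzx dyz dzy
    rw [hsum (fun v => ∑ w, ((thetaGraph 2 2 c).dist v w : ℝ) * f v * f w)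
      (fun v hv => by simp [hzero v hv])]
    rw [Finset.sum_congr rfl
      (fun v _ => hsum (fun w => ((thetaGraph 2 2 c).dist v w : ℝ) * f v * f w)
        (fun w hw => by simp [hzero w hw]))]
    simp [hS, Finset.sum_insert, Finset.mem_insert, Finset.mem_singleton, hf, fW,
      dss, dtt, dxx, dyy, dzz, dst, dts, dsx, dxs, dsy, dys, dxt, dtx, dyt, dty,
      dxy, dyx, dsz, dzs, dtz, dzt, dxz, dzx, dyz, dzy]
    ring

end Scratch

/-- For every n >= 5 there is a theta graph on n vertices of non-QE class. -/
theorem stmt19 (n : ℕ) (hn : 5 ≤ n) :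
    ∃ a b c : ℕ, 1 ≤ a ∧ 1 ≤ b ∧ 1 ≤ c ∧
      ¬(a = 1 ∧ b = 1) ∧ ¬(a = 1 ∧ c = 1) ∧ ¬(b = 1 ∧ c = 1) ∧
      a + b + c - 1 = n ∧
      ∃ f : ThetaV a b c → ℝ, (∑ v, f v) = 0 ∧
        0 < ∑ v, ∑ w, ((thetaGraph a b c).dist v w : ℝ) * f v * f w := by
  refine ⟨2, 2, n - 3, by norm_num, by norm_num, by omega, by norm_num, by simp,
    by simp, by omega, ?_⟩
  set c := n - 3 with hcdef
  have hc : 2 ≤ c := by omega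
  rcases Nat.even_or_odd c with ⟨k, hk⟩ | ⟨k, hk⟩
  · -- c = k + k
    have hk1 : 1 ≤ k := by omega
    have hA : 2 * (k - 1) + 2 ≤ c := by omega
    have hB : c ≤ 2 * (k - 1) + 3 := by omega
    obtain ⟨h1, h2⟩ := Scratch.main c (k - 1) hc hA hB ((k : ℝ) + 1) (-(k : ℝ)) (-2)
    refine ⟨Scratch.fW c (k - 1) ((k : ℝ) + 1) (-(k : ℝ)) (-2), ?_, ?_⟩
    · rw [h1]; ring
    · rw [h2, show c - 1 - (k - 1) = k from by omega,
        show ((k - 1 : ℕ) : ℝ) = (k : ℝ) - 1 from by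
          rw [Nat.cast_sub hk1]; norm_num]
      ring_nf
      norm_num
  · -- c = 2k + 1
    have hk1 : 1 ≤ k := by omega
    have hA : 2 * (k - 1) + 2 ≤ c := by omega
    have hB : c ≤ 2 * (k - 1) + 3 := by omega
    obtain ⟨h1, h2⟩ := Scratch.main c (k - 1) hc hA hB (-(2 * (k : ℝ) + 3)) (2 * (k : ℝ) + 2) 2
    refine ⟨Scratch.fW c (k - 1) (-(2 * (k : ℝ) + 3)) (2 * (k : ℝ) + 2) 2, ?_, ?_⟩
    · rw [h1]; ring
    · rw [h2, show c - 1 - (k - 1) = k + 1 from by omega,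
        show ((k - 1 : ℕ) : ℝ) = (k : ℝ) - 1 from by
          rw [Nat.cast_sub hk1]; norm_num]
      push_cast
      ring_nf
      norm_num
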